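/- arXiv:0909.1437 — 2 statements merged into one kernel-verified Lean document; each statement's English description precedes it below -/
import Mathlib

section
/- Let s = [[A, B], [C, D]] be symplectic with det B ≠ 0 and det(s - I) ≠ 0. Then the Hessian of the map x ↦ W(x, x), namely W''ₓₓ = DB⁻¹ + B⁻¹A - B⁻¹ - (Bᵀ)⁻¹, is invertible. -/
/-!
Swapping the two block columns of `s - I` puts the invertible block `B` in the top-left corner,
with Schur complement `C - (D - I) B⁻¹ (A - I)`. The symplectic relations `BᵀD = DᵀB` and
`DᵀA - BᵀC = I` give `(Bᵀ)⁻¹ = DB⁻¹A - C`, which turns this Schur complement into exactly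
`W''ₓₓ`; hence `s - I` is invertible iff `W''ₓₓ` is.
-/

open Matrix

def stdJ (n : ℕ) : Matrix (Fin n ⊕ Fin n) (Fin n ⊕ Fin n) ℝ :=
  Matrix.fromBlocks 0 1 (-1) 0

namespace Matrix

variable {m α : Type*} [DecidableEq m] [CommRing α]

theorem fromBlocks_sub_one (A B C D : Matrix m m α) :
    fromBlocks A B C D - 1 = fromBlocks (A - 1) B C (D - 1) := by
  rw [← fromBlocks_one, sub_eq_add_neg, fromBlocks_neg, fromBlocks_add]
  simp only [neg_zero, add_zero, ← sub_eq_add_neg]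

variable [Fintype m]

theorem isUnit_fromBlocks_iff_of_invertible₁₂ {A B C D : Matrix m m α} [Invertible B] :
    IsUnit (fromBlocks A B C D) ↔ IsUnit (C - D * ⅟B * A) := by
  rw [← isUnit_submatrix_equiv (Equiv.refl _) (Equiv.sumComm m m)]
  change IsUnit ((fromBlocks A B C D).submatrix id Sum.swap) ↔ _
  rw [fromBlocks_submatrix_sum_swap_right, submatrix_id_id]
  exact isUnit_fromBlocks_iff_of_invertible₁₁

theorem symplectic_fromBlocks_relations {A B C D : Matrix m m α}
    (hs : (fromBlocks A B C D)ᵀ * fromBlocks 0 1 (-1) 0 * fromBlocks A B C D =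
      fromBlocks 0 1 (-1) 0) :
    Bᵀ * D = Dᵀ * B ∧ Dᵀ * A - Bᵀ * C = 1 := by
  simp only [fromBlocks_transpose, fromBlocks_multiply, fromBlocks_inj] at hs
  obtain ⟨-, -, h₂₁, h₂₂⟩ := hs
  constructor
  · linear_combination (norm := noncomm_ring) h₂₂
  · linear_combination (norm := noncomm_ring) -h₂₁

theorem transpose_nonsing_inv_eq_of_symplectic {A B C D : Matrix m m α} (hB : IsUnit B.det)
    (hBD : Bᵀ * D = Dᵀ * B) (hDA : Dᵀ * A - Bᵀ * C = 1) :
    Bᵀ⁻¹ = D * B⁻¹ * A - C := by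
  apply inv_eq_right_inv
  calc Bᵀ * (D * B⁻¹ * A - C) = (Bᵀ * D) * B⁻¹ * A - Bᵀ * C := by noncomm_ring
    _ = Dᵀ * (B * B⁻¹) * A - Bᵀ * C := by rw [hBD]; noncomm_ring
    _ = 1 := by rw [mul_nonsing_inv B hB, Matrix.mul_one, hDA]

theorem schurComplement_sub_one_eq_of_symplectic {A B C D : Matrix m m α} (hB : IsUnit B.det)
    (hBD : Bᵀ * D = Dᵀ * B) (hDA : Dᵀ * A - Bᵀ * C = 1) :
    C - (D - 1) * B⁻¹ * (A - 1) = D * B⁻¹ + B⁻¹ * A - B⁻¹ - Bᵀ⁻¹ := by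
  rw [transpose_nonsing_inv_eq_of_symplectic hB hBD hDA]
  noncomm_ring

end Matrix

/-- If `s = [[A, B], [C, D]]` is symplectic with `det B ≠ 0` and `det (s - I) ≠ 0`,
then the Hessian `W''ₓₓ = DB⁻¹ + B⁻¹A - B⁻¹ - (Bᵀ)⁻¹` of `x ↦ W(x,x)` is invertible. -/
theorem hessian_invertible (n : ℕ) (A B C D : Matrix (Fin n) (Fin n) ℝ)
    (hs : (Matrix.fromBlocks A B C D)ᵀ * stdJ n * Matrix.fromBlocks A B C D = stdJ n)
    (hB : B.det ≠ 0)
    (hdet : (Matrix.fromBlocks A B C D - 1).det ≠ 0) :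
    IsUnit (D * B⁻¹ + B⁻¹ * A - B⁻¹ - Bᵀ⁻¹) := by
  obtain ⟨hBD, hDA⟩ := symplectic_fromBlocks_relations hs
  let := B.invertibleOfIsUnitDet hB.isUnit
  rw [← schurComplement_sub_one_eq_of_symplectic hB.isUnit hBD hDA, ← invOf_eq_nonsing_inv,
    ← isUnit_fromBlocks_iff_of_invertible₁₂, ← fromBlocks_sub_one, isUnit_iff_isUnit_det]
  exact hdet.isUnit
end

section
/- Let s be a symplectic matrix with det(s - I) ≠ 0 and let M = (1/2)J(s + I)(s - I)⁻¹ be its symmetrized Cayley transform. Then s⁻¹ also satisfies det(s⁻¹ - I) ≠ 0 and its symmetrized Cayley transform is -M. -/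
/-!
A symplectic matrix `s` is invertible, and `s⁻¹ ± 1 = (1 ± s) s⁻¹`. Hence `s⁻¹ - 1` is
invertible along with `s - 1`, and the factor `s⁻¹` cancels in `(s⁻¹ + 1)(s⁻¹ - 1)⁻¹`,
leaving `(1 + s)(1 - s)⁻¹ = -(s + 1)(s - 1)⁻¹`.
-/

open Matrix

/-- The symmetrized symplectic Cayley transform `M(s) = (1/2) J (s+I)(s-I)⁻¹`. -/
noncomputable def cayleyM (n : ℕ) (s : Matrix (Fin n ⊕ Fin n) (Fin n ⊕ Fin n) ℝ) :
    Matrix (Fin n ⊕ Fin n) (Fin n ⊕ Fin n) ℝ :=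
  (1 / 2 : ℝ) • (stdJ n * (s + 1) * (s - 1)⁻¹)

namespace Matrix

variable {ι K : Type*} [Fintype ι] [DecidableEq ι] [CommRing K]

lemma isUnit_det_neg_iff (A : Matrix ι ι K) : IsUnit (-A).det ↔ IsUnit A.det := by
  rw [det_neg, IsUnit.mul_iff, and_iff_right (isUnit_neg_one.pow _)]

lemma inv_neg (A : Matrix ι ι K) : (-A)⁻¹ = -A⁻¹ := by
  by_cases hA : IsUnit A.det
  · exact inv_eq_left_inv (by rw [neg_mul_neg, nonsing_inv_mul A hA])
  · rw [nonsing_inv_apply_not_isUnit A hA,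
      nonsing_inv_apply_not_isUnit _ (mt (isUnit_det_neg_iff A).1 hA), neg_zero]

variable {s : Matrix ι ι K}

lemma inv_add_one_eq (hs : IsUnit s.det) : s⁻¹ + 1 = (1 + s) * s⁻¹ := by
  rw [add_mul, one_mul, mul_nonsing_inv s hs]

lemma inv_sub_one_eq (hs : IsUnit s.det) : s⁻¹ - 1 = (1 - s) * s⁻¹ := by
  rw [sub_mul, one_mul, mul_nonsing_inv s hs]

lemma isUnit_det_inv_sub_one (hs : IsUnit s.det) (hs₁ : IsUnit (s - 1).det) :
    IsUnit (s⁻¹ - 1).det := by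
  rw [inv_sub_one_eq hs, det_mul, ← neg_sub]
  exact ((isUnit_det_neg_iff _).2 hs₁).mul (isUnit_nonsing_inv_det s hs)

lemma inv_add_one_mul_inv_inv_sub_one (hs : IsUnit s.det) :
    (s⁻¹ + 1) * (s⁻¹ - 1)⁻¹ = -((s + 1) * (s - 1)⁻¹) := by
  calc (s⁻¹ + 1) * (s⁻¹ - 1)⁻¹ = (1 + s) * (s⁻¹ * s) * (1 - s)⁻¹ := by
        rw [inv_add_one_eq hs, inv_sub_one_eq hs, mul_inv_rev, nonsing_inv_nonsing_inv s hs]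
        simp only [Matrix.mul_assoc]
    _ = -((s + 1) * (s - 1)⁻¹) := by
        rw [nonsing_inv_mul s hs, mul_one, add_comm, ← neg_sub s 1, inv_neg, mul_neg]

end Matrix

lemma stdJ_eq_neg_J (n : ℕ) : stdJ n = -J (Fin n) ℝ := by
  simp [stdJ, J, fromBlocks_neg]

lemma transpose_mul_stdJ_mul_eq_iff_mem_symplecticGroup {n : ℕ}
    (s : Matrix (Fin n ⊕ Fin n) (Fin n ⊕ Fin n) ℝ) :
    sᵀ * stdJ n * s = stdJ n ↔ s ∈ symplecticGroup (Fin n) ℝ := by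
  rw [SymplecticGroup.mem_iff', stdJ_eq_neg_J, mul_neg, neg_mul, neg_inj]

/-- If `s` is symplectic with `det (s - I) ≠ 0`, then `det (s⁻¹ - I) ≠ 0` and
`M(s⁻¹) = -M(s)`. -/
theorem cayleyM_inv (n : ℕ) (s : Matrix (Fin n ⊕ Fin n) (Fin n ⊕ Fin n) ℝ)
    (hs : sᵀ * stdJ n * s = stdJ n) (hdet : (s - 1).det ≠ 0) :
    (s⁻¹ - 1).det ≠ 0 ∧ cayleyM n s⁻¹ = -cayleyM n s := by
  have hs_unit : IsUnit s.det :=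
    SymplecticGroup.symplectic_det ((transpose_mul_stdJ_mul_eq_iff_mem_symplecticGroup s).1 hs)
  refine ⟨(isUnit_det_inv_sub_one hs_unit (isUnit_iff_ne_zero.2 hdet)).ne_zero, ?_⟩
  simp only [cayleyM, Matrix.mul_assoc, inv_add_one_mul_inv_inv_sub_one hs_unit, mul_neg, smul_neg]
end
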